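/- arXiv:math/0310429 — 3 statements merged into one kernel-verified Lean document; each statement's English description precedes it below -/
import Mathlib

section
/- There is no rank-4 abstract polytope all of whose facets are isomorphic to the hemicube {4,3}₃ and all of whose vertex figures are isomorphic to the icosahedron {3,5}, and there is no rank-4 abstract polytope all of whose facets are isomorphic to the hemicube {4,3}₃ and all of whose vertex figures are isomorphic to the hemi-icosahedron {3,5}₅. -/
universe u v

/-- An abstract polytope of rank `n`: a bounded poset equipped with a rank function
taking values in `{-1, 0, ..., n}`, such that every maximal chain (flag) contains exactly
one face of each rank, satisfying the diamond condition and strong flag-connectivity. -/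
structure APolytope (n : ℕ) : Type (u + 1) where
  /-- the type of faces -/
  α : Type u
  [po : PartialOrder α]
  [bo : BoundedOrder α]
  /-- the rank function -/
  rank : α → ℤ
  rank_bot : rank ⊥ = -1
  rank_top : rank ⊤ = (n : ℤ)
  rank_strictMono : StrictMono rank
  rank_mem : ∀ F : α, rank F ∈ Set.Icc (-1 : ℤ) (n : ℤ)
  /-- every flag (maximal chain) contains exactly one face of each rank `-1, ..., n`
  (hence exactly `n + 2` faces) -/
  flag_ranks : ∀ c : Set α, IsMaxChain (· ≤ ·) c →
    ∀ i ∈ Set.Icc (-1 : ℤ) (n : ℤ), ∃! F, F ∈ c ∧ rank F = i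
  /-- the diamond condition -/
  diamond : ∀ F G : α, F < G → rank G = rank F + 2 →
    ∃ H₁ H₂ : α, H₁ ≠ H₂ ∧ ∀ H : α, (F < H ∧ H < G) ↔ (H = H₁ ∨ H = H₂)
  /-- strong flag-connectivity: any two flags `c`, `d` are joined by a sequence of
  flags, successive ones differing in exactly one face, all containing `c ∩ d` -/
  connected : ∀ c d : Set α, IsMaxChain (· ≤ ·) c → IsMaxChain (· ≤ ·) d →
    Relation.ReflTransGen
      (fun x y : Set α => IsMaxChain (· ≤ ·) y ∧ c ∩ d ⊆ y ∧
        (∃ F G : α, x \ y = {F} ∧ y \ x = {G})) c d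

attribute [instance] APolytope.po APolytope.bo

namespace APolytope

variable {n : ℕ}

/-- A flag of a polytope is a maximal chain. -/
def IsFlag (P : APolytope.{u} n) (c : Set P.α) : Prop := IsMaxChain (· ≤ ·) c

/-- Two polytopes are isomorphic when there is an order isomorphism between their
face posets. -/
def Iso (P : APolytope.{u} n) (Q : APolytope.{v} n) : Prop := Nonempty (P.α ≃o Q.α)

/-- All facets (sections below a rank `n-1` face, including the least face) of `P`
are isomorphic to the poset `β`. In rank 4, facets are the sections `F/F₋₁` with
`rank F = 3`. -/
def FacetsAre (P : APolytope.{u} 4) (β : Type*) [PartialOrder β] : Prop :=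
  ∀ F : P.α, P.rank F = 3 → Nonempty (↥(Set.Iic F) ≃o β)

/-- All vertex figures (sections above a rank `0` face, up to the greatest face) of `P`
are isomorphic to the poset `β`. -/
def VertexFiguresAre (P : APolytope.{u} 4) (β : Type*) [PartialOrder β] : Prop :=
  ∀ x : P.α, P.rank x = 0 → Nonempty (↥(Set.Ici x) ≃o β)

end APolytope

def IcosaPosetData : Finset (Finset (Fin 64)) :=
  {{0},
   {0, 1},
   {0, 2},
   {0, 3},
   {0, 4},
   {0, 5},
   {0, 6},
   {0, 7},
   {0, 8},
   {0, 9},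
   {0, 10},
   {0, 11},
   {0, 12},
   {0, 1, 2, 13},
   {0, 1, 3, 14},
   {0, 1, 5, 15},
   {0, 1, 7, 16},
   {0, 1, 9, 17},
   {0, 2, 3, 18},
   {0, 2, 6, 19},
   {0, 2, 7, 20},
   {0, 2, 8, 21},
   {0, 3, 4, 22},
   {0, 3, 8, 23},
   {0, 3, 9, 24},
   {0, 4, 8, 25},
   {0, 4, 9, 26},
   {0, 4, 10, 27},
   {0, 4, 11, 28},
   {0, 5, 7, 29},
   {0, 5, 9, 30},
   {0, 5, 11, 31},
   {0, 5, 12, 32},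
   {0, 6, 7, 33},
   {0, 6, 8, 34},
   {0, 6, 10, 35},
   {0, 6, 12, 36},
   {0, 7, 12, 37},
   {0, 8, 10, 38},
   {0, 9, 11, 39},
   {0, 10, 11, 40},
   {0, 10, 12, 41},
   {0, 11, 12, 42},
   {0, 1, 2, 3, 13, 14, 18, 43},
   {0, 1, 2, 7, 13, 16, 20, 44},
   {0, 1, 3, 9, 14, 17, 24, 45},
   {0, 1, 5, 7, 15, 16, 29, 46},
   {0, 1, 5, 9, 15, 17, 30, 47},
   {0, 2, 3, 8, 18, 21, 23, 48},
   {0, 2, 6, 7, 19, 20, 33, 49},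
   {0, 2, 6, 8, 19, 21, 34, 50},
   {0, 3, 4, 8, 22, 23, 25, 51},
   {0, 3, 4, 9, 22, 24, 26, 52},
   {0, 4, 8, 10, 25, 27, 38, 53},
   {0, 4, 9, 11, 26, 28, 39, 54},
   {0, 4, 10, 11, 27, 28, 40, 55},
   {0, 5, 7, 12, 29, 32, 37, 56},
   {0, 5, 9, 11, 30, 31, 39, 57},
   {0, 5, 11, 12, 31, 32, 42, 58},
   {0, 6, 7, 12, 33, 36, 37, 59},
   {0, 6, 8, 10, 34, 35, 38, 60},
   {0, 6, 10, 12, 35, 36, 41, 61},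
   {0, 10, 11, 12, 40, 41, 42, 62},
   {0, 1, 2, 3, 4, 5, 6, 7, 8, 9, 10, 11, 12, 13, 14, 15, 16, 17, 18, 19, 20, 21, 22, 23, 24, 25, 26, 27, 28, 29, 30, 31, 32, 33, 34, 35, 36, 37, 38, 39, 40, 41, 42, 43, 44, 45, 46, 47, 48, 49, 50, 51, 52, 53, 54, 55, 56, 57, 58, 59, 60, 61, 62, 63}}

abbrev IcosaPoset := {S : Finset (Fin 64) // S ∈ IcosaPosetData}

def HemicubePosetData : Finset (Finset (Fin 15)) :=
  {{0},
   {0, 1},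
   {0, 2},
   {0, 1, 2, 3},
   {0, 4},
   {0, 5},
   {0, 4, 5, 6},
   {0, 1, 4, 7},
   {0, 2, 5, 8},
   {0, 1, 2, 3, 4, 5, 6, 7, 8, 9},
   {0, 1, 5, 10},
   {0, 2, 4, 11},
   {0, 1, 2, 3, 4, 5, 6, 10, 11, 12},
   {0, 1, 2, 4, 5, 7, 8, 10, 11, 13},
   {0, 1, 2, 3, 4, 5, 6, 7, 8, 9, 10, 11, 12, 13, 14}}

abbrev HemicubePoset := {S : Finset (Fin 15) // S ∈ HemicubePosetData}

def HemiIcosaPosetData : Finset (Finset (Fin 33)) :=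
  {{0},
   {0, 1},
   {0, 2},
   {0, 3},
   {0, 4},
   {0, 5},
   {0, 6},
   {0, 1, 2, 7},
   {0, 1, 3, 8},
   {0, 1, 5, 9},
   {0, 1, 4, 10},
   {0, 1, 6, 11},
   {0, 2, 3, 12},
   {0, 2, 6, 13},
   {0, 2, 4, 14},
   {0, 2, 5, 15},
   {0, 3, 4, 16},
   {0, 3, 5, 17},
   {0, 3, 6, 18},
   {0, 4, 5, 19},
   {0, 4, 6, 20},
   {0, 5, 6, 21},
   {0, 1, 2, 3, 7, 8, 12, 22},
   {0, 1, 2, 4, 7, 10, 14, 23},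
   {0, 1, 3, 6, 8, 11, 18, 24},
   {0, 1, 4, 5, 9, 10, 19, 25},
   {0, 1, 5, 6, 9, 11, 21, 26},
   {0, 2, 3, 5, 12, 15, 17, 27},
   {0, 2, 4, 6, 13, 14, 20, 28},
   {0, 2, 5, 6, 13, 15, 21, 29},
   {0, 3, 4, 5, 16, 17, 19, 30},
   {0, 3, 4, 6, 16, 18, 20, 31},
   {0, 1, 2, 3, 4, 5, 6, 7, 8, 9, 10, 11, 12, 13, 14, 15, 16, 17, 18, 19, 20, 21, 22, 23, 24, 25, 26, 27, 28, 29, 30, 31, 32}}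

abbrev HemiIcosaPoset := {S : Finset (Fin 33) // S ∈ HemiIcosaPosetData}


namespace Aux

def hcleTbl : List (List Bool) :=
  [[true, true, true, true, true, true, true, true, true, true, true, true, true, true, true],
   [false, true, false, true, false, false, false, true, false, true, true, false, true, true, true],
   [false, false, true, true, false, false, false, false, true, true, false, true, true, true, true],
   [false, false, false, true, false, false, false, false, false, true, false, false, true, false, true],
   [false, false, false, false, true, false, true, true, false, true, false, true, true, true, true],
   [false, false, false, false, false, true, true, false, true, true, true, false, true, true, true],
   [false, false, false, false, false, false, true, false, false, true, false, false, true, false, true],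
   [false, false, false, false, false, false, false, true, false, true, false, false, false, true, true],
   [false, false, false, false, false, false, false, false, true, true, false, false, false, true, true],
   [false, false, false, false, false, false, false, false, false, true, false, false, false, false, true],
   [false, false, false, false, false, false, false, false, false, false, true, false, true, true, true],
   [false, false, false, false, false, false, false, false, false, false, false, true, true, true, true],
   [false, false, false, false, false, false, false, false, false, false, false, false, true, false, true],
   [false, false, false, false, false, false, false, false, false, false, false, false, false, true, true],
   [false, false, false, false, false, false, false, false, false, false, false, false, false, false, true]]

def hcle (i j : Fin 15) : Bool := (hcleTbl.getD i.1 []).getD j.1 false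

def hclt (i j : Fin 15) : Bool := hcle i j && !(i == j)

def hccard (i : Fin 15) : Nat :=
  ([1, 2, 2, 4, 2, 2, 4, 4, 4, 10, 4, 4, 10, 10, 15] : List Nat).getD i.1 0

def hguTbl : List (Fin 15 × Fin 15 × Fin 15 × Fin 15 × Fin 15) :=
  [(1, 3, 9, 7, 4),
   (1, 3, 12, 10, 5),
   (1, 7, 9, 3, 2),
   (1, 7, 13, 10, 5),
   (1, 10, 12, 3, 2),
   (1, 10, 13, 7, 4),
   (2, 3, 9, 8, 5),
   (2, 3, 12, 11, 4),
   (2, 8, 9, 3, 1),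
   (2, 8, 13, 11, 4),
   (2, 11, 12, 3, 1),
   (2, 11, 13, 8, 5),
   (4, 6, 9, 7, 1),
   (4, 6, 12, 11, 2),
   (4, 7, 9, 6, 5),
   (4, 7, 13, 11, 2),
   (4, 11, 12, 6, 5),
   (4, 11, 13, 7, 1),
   (5, 6, 9, 8, 2),
   (5, 6, 12, 10, 1),
   (5, 8, 9, 6, 4),
   (5, 8, 13, 10, 1),
   (5, 10, 12, 6, 4),
   (5, 10, 13, 8, 2)]

def hg (V E Q : Fin 15) : Fin 15 :=
  (((hguTbl.find? (fun p => p.1 == V && p.2.1 == E && p.2.2.1 == Q)).map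
    (fun p => p.2.2.2.1)).getD 0)

def hu (V E Q : Fin 15) : Fin 15 :=
  (((hguTbl.find? (fun p => p.1 == V && p.2.1 == E && p.2.2.1 == Q)).map
    (fun p => p.2.2.2.2)).getD 0)

def hopp (E : Fin 15) : Fin 15 := ([0, 0, 0, 6, 0, 0, 3, 8, 7, 0, 11, 10, 0, 0, 0] : List (Fin 15)).getD E.1 0

def hcelts : List (Finset (Fin 15)) :=
  [{0}, {0, 1}, {0, 2}, {0, 1, 2, 3}, {0, 4}, {0, 5}, {0, 4, 5, 6}, {0, 1, 4, 7},
   {0, 2, 5, 8}, {0, 1, 2, 3, 4, 5, 6, 7, 8, 9}, {0, 1, 5, 10}, {0, 2, 4, 11},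
   {0, 1, 2, 3, 4, 5, 6, 10, 11, 12}, {0, 1, 2, 4, 5, 7, 8, 10, 11, 13},
   {0, 1, 2, 3, 4, 5, 6, 7, 8, 9, 10, 11, 12, 13, 14}]

theorem hcelts_mem : ∀ i : Fin 15, hcelts.getD i.1 {0} ∈ HemicubePosetData := by decide

def elt (i : Fin 15) : HemicubePoset := ⟨hcelts.getD i.1 {0}, hcelts_mem i⟩

instance instFinHC : Fintype HemicubePoset := FinsetCoe.fintype _

instance instLtHC (a b : HemicubePoset) : Decidable (a < b) :=
  decidable_of_iff (a.1 < b.1) Subtype.coe_lt_coe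

theorem br_lt : ∀ i j : Fin 15, hclt i j = true ↔ elt i < elt j := by decide

theorem br_eq : ∀ i j : Fin 15, elt i = elt j ↔ i = j := by decide

theorem br_surj : ∀ a : HemicubePoset, ∃ i : Fin 15, elt i = a := by decide

theorem m_bot_unique : ∀ i : Fin 15, (∀ j : Fin 15, i = j ∨ hclt i j = true) → i = 0 := by decide

theorem mcard2 : ∀ i : Fin 15, hclt 0 i = true →
    (∀ j : Fin 15, ¬(hclt 0 j = true ∧ hclt j i = true)) → hccard i = 2 := by decide

theorem mcard4 : ∀ i k : Fin 15, hccard i = 2 → hclt i k = true →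
    (∀ j : Fin 15, ¬(hclt i j = true ∧ hclt j k = true)) → hccard k = 4 := by decide

theorem mcard10 : ∀ i k : Fin 15, hccard i = 4 → hclt i k = true →
    (∀ j : Fin 15, ¬(hclt i j = true ∧ hclt j k = true)) → hccard k = 10 := by decide

set_option synthInstance.maxHeartbeats 1000000 in
set_option synthInstance.maxSize 3000 in
set_option maxHeartbeats 1000000 in
theorem mF1 : ∀ V E Q : Fin 15, hccard V = 2 → hccard E = 4 → hccard Q = 10 →
    hclt V E = true → hclt E Q = true →
    (∀ h : Fin 15, hccard h = 4 → hclt V h = true → hclt h Q = true → h = E ∨ h = hg V E Q) ∧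
    (∀ z : Fin 15, hccard z = 2 → hclt z (hg V E Q) = true → z = V ∨ z = hu V E Q) ∧
    (∀ h : Fin 15, hccard h = 4 → hclt (hu V E Q) h = true → hclt h Q = true →
      h = hg V E Q ∨ h = hopp E) := by decide

set_option synthInstance.maxHeartbeats 1000000 in
set_option synthInstance.maxSize 3000 in
set_option maxHeartbeats 4000000 in
theorem mF2 : ∀ V E Q Q' : Fin 15, hccard V = 2 → hccard E = 4 → hccard Q = 10 →
    hccard Q' = 10 → hclt V E = true → hclt E Q = true → hclt E Q' = true → Q ≠ Q' →
    hu V E Q ≠ hu V E Q' := by decide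

end Aux


universe w

section AuxPoly

open Aux

theorem iso_least {α : Type*} {β : Type*} [PartialOrder α] [PartialOrder β]
    (f : α ≃o β) {a : α} {b : β} (ha : ∀ x, a ≤ x) (hb : ∀ y, b ≤ y) : f a = b :=
  le_antisymm (by simpa using f.monotone (ha (f.symm b))) (hb _)

theorem iso_greatest {α : Type*} {β : Type*} [PartialOrder α] [PartialOrder β]
    (f : α ≃o β) {a : α} {b : β} (ha : ∀ x, x ≤ a) (hb : ∀ y, y ≤ b) : f a = b :=
  le_antisymm (hb _) (by simpa using f.monotone (ha (f.symm b)))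

/-- From a vertex `v`, an edge `e` and a square `Q` of `P`, produce the other edge `g` of
`Q` at `v`, the other vertex `u` of `g`, and the other edge `t` of `Q` at `u`. -/
theorem square_data (P : APolytope.{w} 4) {v e Q : P.α}
    (rv : P.rank v = 0) (rQ : P.rank Q = 2) (hve : v < e) (heQ : e < Q) :
    ∃ g u t : P.α, (v < g ∧ g < Q ∧ g ≠ e) ∧ ((⊥ : P.α) < u ∧ u < g ∧ u ≠ v) ∧
      (u < t ∧ t < Q ∧ t ≠ g) ∧ P.rank u = 0 ∧ P.rank t = 1 := by
  have hsm := P.rank_strictMono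
  have rb := P.rank_bot
  obtain ⟨H₁, H₂, hne, hiff⟩ := P.diamond v Q (hve.trans heQ) (by omega)
  have he12 := (hiff e).1 ⟨hve, heQ⟩
  have hg : ∃ g : P.α, (v < g ∧ g < Q) ∧ g ≠ e := by
    rcases he12 with h | h
    · exact ⟨H₂, (hiff H₂).2 (Or.inr rfl), by rw [h]; exact hne.symm⟩
    · exact ⟨H₁, (hiff H₁).2 (Or.inl rfl), by rw [h]; exact hne⟩
  obtain ⟨g, ⟨hvg, hgQ⟩, hge⟩ := hg
  have rg : P.rank g = 1 := by have := hsm hvg; have := hsm hgQ; omega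
  have hbv : (⊥ : P.α) < v := by
    refine Ne.bot_lt fun h => ?_
    rw [h, rb] at rv; exact absurd rv (by decide)
  obtain ⟨K₁, K₂, hkne, hkiff⟩ := P.diamond ⊥ g (hbv.trans hvg) (by omega)
  have hv12 := (hkiff v).1 ⟨hbv, hvg⟩
  have hu : ∃ u : P.α, ((⊥ : P.α) < u ∧ u < g) ∧ u ≠ v := by
    rcases hv12 with h | h
    · exact ⟨K₂, (hkiff K₂).2 (Or.inr rfl), by rw [h]; exact hkne.symm⟩
    · exact ⟨K₁, (hkiff K₁).2 (Or.inl rfl), by rw [h]; exact hkne⟩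
  obtain ⟨u, ⟨hbu, hug⟩, huv⟩ := hu
  have ru : P.rank u = 0 := by have := hsm hbu; have := hsm hug; omega
  obtain ⟨L₁, L₂, hlne, hliff⟩ := P.diamond u Q (hug.trans hgQ) (by omega)
  have hg12 := (hliff g).1 ⟨hug, hgQ⟩
  have ht : ∃ t : P.α, (u < t ∧ t < Q) ∧ t ≠ g := by
    rcases hg12 with h | h
    · exact ⟨L₂, (hliff L₂).2 (Or.inr rfl), by rw [h]; exact hlne.symm⟩
    · exact ⟨L₁, (hliff L₁).2 (Or.inl rfl), by rw [h]; exact hlne⟩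
  obtain ⟨t, ⟨hut, htQ⟩, htg⟩ := ht
  have rt : P.rank t = 1 := by have := hsm hut; have := hsm htQ; omega
  exact ⟨g, u, t, ⟨hvg, hgQ, hge⟩, ⟨hbu, hug, huv⟩, ⟨hut, htQ, htg⟩, ru, rt⟩

/-- Transport through a hemicube facet: the opposite edges agree and the
opposite vertices differ. -/
theorem hcTransport {P : APolytope.{w} 4} {F v e Q Q' g u t g' u' t' : P.α}
    (hiso : Nonempty (↥(Set.Iic F) ≃o HemicubePoset))
    (rv : P.rank v = 0) (re : P.rank e = 1) (rQ : P.rank Q = 2) (rQ' : P.rank Q' = 2)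
    (hve : v < e) (heQ : e < Q) (heQ' : e < Q') (hQF : Q < F) (hQ'F : Q' < F) (hQQ' : Q ≠ Q')
    (hvg : v < g) (hgQ : g < Q) (hge : g ≠ e)
    (hbu : (⊥ : P.α) < u) (hug : u < g) (huv : u ≠ v)
    (hut : u < t) (htQ : t < Q) (htg : t ≠ g)
    (hvg' : v < g') (hgQ' : g' < Q') (hge' : g' ≠ e)
    (hbu' : (⊥ : P.α) < u') (hug' : u' < g') (huv' : u' ≠ v)
    (hut' : u' < t') (htQ' : t' < Q') (htg' : t' ≠ g') :
    t = t' ∧ u ≠ u' := by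
  obtain ⟨ψ⟩ := hiso
  have hsm := P.rank_strictMono
  have rb := P.rank_bot
  have rg : P.rank g = 1 := by have := hsm hvg; have := hsm hgQ; omega
  have ru : P.rank u = 0 := by have := hsm hbu; have := hsm hug; omega
  have rt : P.rank t = 1 := by have := hsm hut; have := hsm htQ; omega
  have rg' : P.rank g' = 1 := by have := hsm hvg'; have := hsm hgQ'; omega
  have ru' : P.rank u' = 0 := by have := hsm hbu'; have := hsm hug'; omega
  have rt' : P.rank t' = 1 := by have := hsm hut'; have := hsm htQ'; omega
  -- memberships in Set.Iic F
  have mb : (⊥ : P.α) ∈ Set.Iic F := bot_le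
  have mQ : Q ∈ Set.Iic F := hQF.le
  have mQ' : Q' ∈ Set.Iic F := hQ'F.le
  have me : e ∈ Set.Iic F := (heQ.trans hQF).le
  have mv : v ∈ Set.Iic F := ((hve.trans heQ).trans hQF).le
  have mg : g ∈ Set.Iic F := (hgQ.trans hQF).le
  have mu : u ∈ Set.Iic F := ((hug.trans hgQ).trans hQF).le
  have mt : t ∈ Set.Iic F := (htQ.trans hQF).le
  have mg' : g' ∈ Set.Iic F := (hgQ'.trans hQ'F).le
  have mu' : u' ∈ Set.Iic F := ((hug'.trans hgQ').trans hQ'F).le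
  have mt' : t' ∈ Set.Iic F := (htQ'.trans hQ'F).le
  -- indices
  obtain ⟨iB, hiB⟩ := br_surj (ψ ⟨⊥, mb⟩)
  obtain ⟨iV, hiV⟩ := br_surj (ψ ⟨v, mv⟩)
  obtain ⟨iE, hiE⟩ := br_surj (ψ ⟨e, me⟩)
  obtain ⟨iQ, hiQ⟩ := br_surj (ψ ⟨Q, mQ⟩)
  obtain ⟨iQ', hiQ'⟩ := br_surj (ψ ⟨Q', mQ'⟩)
  obtain ⟨ig, hig⟩ := br_surj (ψ ⟨g, mg⟩)
  obtain ⟨iu, hiu⟩ := br_surj (ψ ⟨u, mu⟩)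
  obtain ⟨it, hit⟩ := br_surj (ψ ⟨t, mt⟩)
  obtain ⟨ig', hig'⟩ := br_surj (ψ ⟨g', mg'⟩)
  obtain ⟨iu', hiu'⟩ := br_surj (ψ ⟨u', mu'⟩)
  obtain ⟨it', hit'⟩ := br_surj (ψ ⟨t', mt'⟩)
  -- transfer of strict order
  have key : ∀ {z z' : P.α} (hz : z ∈ Set.Iic F) (hz' : z' ∈ Set.Iic F) {i j : Fin 15},
      elt i = ψ ⟨z, hz⟩ → elt j = ψ ⟨z', hz'⟩ → z < z' → hclt i j = true := by
    intro z z' hz hz' i j hi hj hzz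
    refine (br_lt i j).2 ?_
    rw [hi, hj]
    exact ψ.lt_iff_lt.2 (Subtype.mk_lt_mk.2 hzz)
  -- transfer of distinctness
  have keyne : ∀ {z z' : P.α} (hz : z ∈ Set.Iic F) (hz' : z' ∈ Set.Iic F) {i j : Fin 15},
      elt i = ψ ⟨z, hz⟩ → elt j = ψ ⟨z', hz'⟩ → z ≠ z' → i ≠ j := by
    intro z z' hz hz' i j hi hj hzz hij
    apply hzz
    have : ψ ⟨z, hz⟩ = ψ ⟨z', hz'⟩ := by rw [← hi, ← hj, hij]
    exact congrArg Subtype.val (ψ.injective this)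
  -- recover equality in P from equality of indices
  have keyeq : ∀ {z z' : P.α} (hz : z ∈ Set.Iic F) (hz' : z' ∈ Set.Iic F) {i j : Fin 15},
      elt i = ψ ⟨z, hz⟩ → elt j = ψ ⟨z', hz'⟩ → i = j → z = z' := by
    intro z z' hz hz' i j hi hj hij
    have : ψ ⟨z, hz⟩ = ψ ⟨z', hz'⟩ := by rw [← hi, ← hj, hij]
    exact congrArg Subtype.val (ψ.injective this)
  -- no element strictly between two elements with consecutive ranks
  have nobet : ∀ {z z' : P.α} (hz : z ∈ Set.Iic F) (hz' : z' ∈ Set.Iic F) {i j : Fin 15},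
      elt i = ψ ⟨z, hz⟩ → elt j = ψ ⟨z', hz'⟩ → P.rank z' = P.rank z + 1 →
      ∀ k : Fin 15, ¬(hclt i k = true ∧ hclt k j = true) := by
    rintro z z' hz hz' i j hi hj hr k ⟨h1, h2⟩
    have l1 : elt i < elt k := (br_lt _ _).1 h1
    have l2 : elt k < elt j := (br_lt _ _).1 h2
    have hk : elt k = ψ (ψ.symm (elt k)) := (ψ.apply_symm_apply _).symm
    rw [hi, hk] at l1
    rw [hk, hj] at l2
    have p1 : z < (ψ.symm (elt k) : P.α) := Subtype.coe_lt_coe.2 (ψ.lt_iff_lt.1 l1)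
    have p2 : ((ψ.symm (elt k) : P.α)) < z' := Subtype.coe_lt_coe.2 (ψ.lt_iff_lt.1 l2)
    have q1 := hsm p1
    have q2 := hsm p2
    omega
  -- bottom index is 0
  have hbv : (⊥ : P.α) < v := by
    refine Ne.bot_lt fun h => ?_
    rw [h, rb] at rv; exact absurd rv (by decide)
  have hiB0 : iB = 0 := by
    apply m_bot_unique
    intro j
    by_cases h : iB = j
    · exact Or.inl h
    · refine Or.inr ((br_lt iB j).2 (lt_of_le_of_ne ?_ fun hh => h ((br_eq iB j).1 hh)))
      rw [hiB]
      calc ψ ⟨⊥, mb⟩ ≤ ψ (ψ.symm (elt j)) :=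
            ψ.monotone (Subtype.mk_le_mk.2 bot_le)
        _ = elt j := ψ.apply_symm_apply _
  rw [hiB0] at hiB
  -- cards
  have cV : hccard iV = 2 := mcard2 iV (key mb mv hiB hiV hbv) (nobet mb mv hiB hiV (by omega))
  have cE : hccard iE = 4 := mcard4 iV iE cV (key mv me hiV hiE hve) (nobet mv me hiV hiE (by omega))
  have cQ : hccard iQ = 10 := mcard10 iE iQ cE (key me mQ hiE hiQ heQ) (nobet me mQ hiE hiQ (by omega))
  have cQ' : hccard iQ' = 10 := mcard10 iE iQ' cE (key me mQ' hiE hiQ' heQ') (nobet me mQ' hiE hiQ' (by omega))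
  have cg : hccard ig = 4 := mcard4 iV ig cV (key mv mg hiV hig hvg) (nobet mv mg hiV hig (by omega))
  have cu : hccard iu = 2 := mcard2 iu (key mb mu hiB hiu hbu) (nobet mb mu hiB hiu (by omega))
  have ct : hccard it = 4 := mcard4 iu it cu (key mu mt hiu hit hut) (nobet mu mt hiu hit (by omega))
  have cg' : hccard ig' = 4 := mcard4 iV ig' cV (key mv mg' hiV hig' hvg') (nobet mv mg' hiV hig' (by omega))
  have cu' : hccard iu' = 2 := mcard2 iu' (key mb mu' hiB hiu' hbu') (nobet mb mu' hiB hiu' (by omega))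
  have ct' : hccard it' = 4 := mcard4 iu' it' cu' (key mu' mt' hiu' hit' hut') (nobet mu' mt' hiu' hit' (by omega))
  -- main facts
  have lVE := key mv me hiV hiE hve
  have lEQ := key me mQ hiE hiQ heQ
  have lEQ' := key me mQ' hiE hiQ' heQ'
  obtain ⟨gclause, uclause, tclause⟩ := mF1 iV iE iQ cV cE cQ lVE lEQ
  obtain ⟨gclause', uclause', tclause'⟩ := mF1 iV iE iQ' cV cE cQ' lVE lEQ'
  have hgid : ig = hg iV iE iQ := by
    rcases gclause ig cg (key mv mg hiV hig hvg) (key mg mQ hig hiQ hgQ) with h | h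
    · exact absurd (keyeq mg me hig hiE h) hge
    · exact h
  have huid : iu = hu iV iE iQ := by
    have : hclt iu (hg iV iE iQ) = true := by rw [← hgid]; exact key mu mg hiu hig hug
    rcases uclause iu cu this with h | h
    · exact absurd (keyeq mu mv hiu hiV h) huv
    · exact h
  have htid : it = hopp iE := by
    have h1 : hclt (hu iV iE iQ) it = true := by rw [← huid]; exact key mu mt hiu hit hut
    rcases tclause it ct h1 (key mt mQ hit hiQ htQ) with h | h
    · rw [← hgid] at h
      exact absurd (keyeq mt mg hit hig h) htg
    · exact h
  have hgid' : ig' = hg iV iE iQ' := by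
    rcases gclause' ig' cg' (key mv mg' hiV hig' hvg') (key mg' mQ' hig' hiQ' hgQ') with h | h
    · exact absurd (keyeq mg' me hig' hiE h) hge'
    · exact h
  have huid' : iu' = hu iV iE iQ' := by
    have : hclt iu' (hg iV iE iQ') = true := by rw [← hgid']; exact key mu' mg' hiu' hig' hug'
    rcases uclause' iu' cu' this with h | h
    · exact absurd (keyeq mu' mv hiu' hiV h) huv'
    · exact h
  have htid' : it' = hopp iE := by
    have h1 : hclt (hu iV iE iQ') it' = true := by rw [← huid']; exact key mu' mt' hiu' hit' hut'
    rcases tclause' it' ct' h1 (key mt' mQ' hit' hiQ' htQ') with h | h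
    · rw [← hgid'] at h
      exact absurd (keyeq mt' mg' hit' hig' h) htg'
    · exact h
  constructor
  · exact keyeq mt mt' hit hit' (htid.trans htid'.symm)
  · intro huu
    have neQQ : iQ ≠ iQ' := keyne mQ mQ' hiQ hiQ' hQQ'
    have this := mF2 iV iE iQ iQ' cV cE cQ cQ' lVE lEQ lEQ' neQQ
    rw [← huid, ← huid'] at this
    apply this
    apply (br_eq iu iu').1
    rw [hiu, hiu']
    exact congrArg ψ (Subtype.ext huu)

end AuxPoly


section Data

instance : Fintype IcosaPoset := FinsetCoe.fintype _

instance : Fintype HemiIcosaPoset := FinsetCoe.fintype _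

instance (a b : IcosaPoset) : Decidable (a < b) :=
  decidable_of_iff (a.1 < b.1) Subtype.coe_lt_coe

instance (a b : IcosaPoset) : Decidable (a ≤ b) :=
  decidable_of_iff (a.1 ≤ b.1) Subtype.coe_le_coe

instance (a b : HemiIcosaPoset) : Decidable (a < b) :=
  decidable_of_iff (a.1 < b.1) Subtype.coe_lt_coe

instance (a b : HemiIcosaPoset) : Decidable (a ≤ b) :=
  decidable_of_iff (a.1 ≤ b.1) Subtype.coe_le_coe

end Data


section Main

open Aux

set_option maxHeartbeats 1000000 in
/-- Main lemma: no rank-4 polytope with hemicube facets can have vertex figures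
isomorphic to a poset containing a pentagonal vertex link. -/
theorem noGood (P : APolytope.{w} 4) (hFac : P.FacetsAre HemicubePoset)
    {β : Type} [PartialOrder β]
    (bo tp x m0 m1 m2 m3 m4 n0 n1 n2 n3 n4 : β)
    (hbo : ∀ y, bo ≤ y) (htp : ∀ y, y ≤ tp)
    (hx : bo < x)
    (hxm0 : x < m0) (hxm1 : x < m1) (hxm2 : x < m2) (hxm3 : x < m3) (hxm4 : x < m4)
    (h00 : m0 < n0) (h10 : m1 < n0) (h11 : m1 < n1) (h21 : m2 < n1)
    (h22 : m2 < n2) (h32 : m3 < n2) (h33 : m3 < n3) (h43 : m4 < n3)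
    (h44 : m4 < n4) (h04 : m0 < n4)
    (ne01 : m0 ≠ m1) (ne12 : m1 ≠ m2) (ne23 : m2 ≠ m3) (ne34 : m3 ≠ m4) (ne40 : m4 ≠ m0)
    (ht0 : n0 < tp) (ht1 : n1 < tp) (ht2 : n2 < tp) (ht3 : n3 < tp) (ht4 : n4 < tp)
    (hVer : P.VertexFiguresAre β) : False := by
  classical
  obtain ⟨c, hc, -⟩ := (IsChain.empty : IsChain (· ≤ ·) (∅ : Set P.α)).exists_maxChain
  obtain ⟨v, ⟨-, rv⟩, -⟩ := P.flag_ranks c hc 0 (by norm_num)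
  obtain ⟨φ⟩ := hVer v rv
  set L : β → P.α := fun b => ((φ.symm b : ↥(Set.Ici v)) : P.α) with hL
  have Lmono : ∀ {a b : β}, a < b → L a < L b := fun h =>
    Subtype.coe_lt_coe.2 (φ.symm.lt_iff_lt.2 h)
  have Linj : ∀ {a b : β}, L a = L b → a = b := fun h =>
    φ.symm.injective (Subtype.ext h)
  have Lbo : L bo = v := by
    have h := iso_least φ.symm hbo
      (fun y => Subtype.coe_le_coe.1 (Set.mem_Ici.1 y.2) :
        ∀ y : ↥(Set.Ici v), (⟨v, Set.self_mem_Ici⟩ : ↥(Set.Ici v)) ≤ y)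
    exact congrArg Subtype.val h
  have Ltp : L tp = ⊤ := by
    have h := iso_greatest φ.symm htp
      (fun y => Subtype.coe_le_coe.1 le_top :
        ∀ y : ↥(Set.Ici v), y ≤ (⟨⊤, Set.mem_Ici.2 le_top⟩ : ↥(Set.Ici v)))
    exact congrArg Subtype.val h
  have hve : v < L x := by rw [← Lbo]; exact Lmono hx
  have heQ0 : L x < L m0 := Lmono hxm0
  have heQ1 : L x < L m1 := Lmono hxm1
  have heQ2 : L x < L m2 := Lmono hxm2
  have heQ3 : L x < L m3 := Lmono hxm3
  have heQ4 : L x < L m4 := Lmono hxm4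
  have hQF00 : L m0 < L n0 := Lmono h00
  have hQF10 : L m1 < L n0 := Lmono h10
  have hQF11 : L m1 < L n1 := Lmono h11
  have hQF21 : L m2 < L n1 := Lmono h21
  have hQF22 : L m2 < L n2 := Lmono h22
  have hQF32 : L m3 < L n2 := Lmono h32
  have hQF33 : L m3 < L n3 := Lmono h33
  have hQF43 : L m4 < L n3 := Lmono h43
  have hQF44 : L m4 < L n4 := Lmono h44
  have hQF04 : L m0 < L n4 := Lmono h04
  have hFt0 : L n0 < ⊤ := by rw [← Ltp]; exact Lmono ht0
  have hFt1 : L n1 < ⊤ := by rw [← Ltp]; exact Lmono ht1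
  have hFt2 : L n2 < ⊤ := by rw [← Ltp]; exact Lmono ht2
  have hFt3 : L n3 < ⊤ := by rw [← Ltp]; exact Lmono ht3
  have hFt4 : L n4 < ⊤ := by rw [← Ltp]; exact Lmono ht4
  have neQ01 : L m0 ≠ L m1 := fun h => ne01 (Linj h)
  have neQ12 : L m1 ≠ L m2 := fun h => ne12 (Linj h)
  have neQ23 : L m2 ≠ L m3 := fun h => ne23 (Linj h)
  have neQ34 : L m3 ≠ L m4 := fun h => ne34 (Linj h)
  have neQ40 : L m4 ≠ L m0 := fun h => ne40 (Linj h)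
  -- ranks
  have rtop : P.rank ⊤ = 4 := by simpa using P.rank_top
  have hsm := P.rank_strictMono
  have cr : ∀ {a1 b1 c1 : P.α}, v < a1 → a1 < b1 → b1 < c1 → c1 < ⊤ →
      P.rank a1 = 1 ∧ P.rank b1 = 2 ∧ P.rank c1 = 3 := by
    intro a1 b1 c1 k1 k2 k3 k4
    have g1 := hsm k1; have g2 := hsm k2; have g3 := hsm k3; have g4 := hsm k4
    omega
  obtain ⟨re, rQ0, rF0⟩ := cr hve heQ0 hQF00 hFt0
  obtain ⟨-, rQ1, rF1⟩ := cr hve heQ1 hQF11 hFt1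
  obtain ⟨-, rQ2, rF2⟩ := cr hve heQ2 hQF22 hFt2
  obtain ⟨-, rQ3, rF3⟩ := cr hve heQ3 hQF33 hFt3
  obtain ⟨-, rQ4, rF4⟩ := cr hve heQ4 hQF44 hFt4
  -- square data
  obtain ⟨g0, u0, w0, ⟨hvg0, hgQ0, hge0⟩, ⟨hbu0, hug0, huv0⟩, ⟨hut0, htQ0, htg0⟩, ru0, rw0⟩ :=
    square_data P rv rQ0 hve heQ0
  obtain ⟨g1, u1, w1, ⟨hvg1, hgQ1, hge1⟩, ⟨hbu1, hug1, huv1⟩, ⟨hut1, htQ1, htg1⟩, ru1, rw1⟩ :=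
    square_data P rv rQ1 hve heQ1
  obtain ⟨g2, u2, w2, ⟨hvg2, hgQ2, hge2⟩, ⟨hbu2, hug2, huv2⟩, ⟨hut2, htQ2, htg2⟩, ru2, rw2⟩ :=
    square_data P rv rQ2 hve heQ2
  obtain ⟨g3, u3, w3, ⟨hvg3, hgQ3, hge3⟩, ⟨hbu3, hug3, huv3⟩, ⟨hut3, htQ3, htg3⟩, ru3, rw3⟩ :=
    square_data P rv rQ3 hve heQ3
  obtain ⟨g4, u4, w4, ⟨hvg4, hgQ4, hge4⟩, ⟨hbu4, hug4, huv4⟩, ⟨hut4, htQ4, htg4⟩, ru4, rw4⟩ :=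
    square_data P rv rQ4 hve heQ4
  -- transports across the five facets of the pentagon
  have T0 := hcTransport (hFac (L n0) rF0) rv re rQ0 rQ1 hve heQ0 heQ1 hQF00 hQF10 neQ01
    hvg0 hgQ0 hge0 hbu0 hug0 huv0 hut0 htQ0 htg0
    hvg1 hgQ1 hge1 hbu1 hug1 huv1 hut1 htQ1 htg1
  have T1 := hcTransport (hFac (L n1) rF1) rv re rQ1 rQ2 hve heQ1 heQ2 hQF11 hQF21 neQ12
    hvg1 hgQ1 hge1 hbu1 hug1 huv1 hut1 htQ1 htg1
    hvg2 hgQ2 hge2 hbu2 hug2 huv2 hut2 htQ2 htg2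
  have T2 := hcTransport (hFac (L n2) rF2) rv re rQ2 rQ3 hve heQ2 heQ3 hQF22 hQF32 neQ23
    hvg2 hgQ2 hge2 hbu2 hug2 huv2 hut2 htQ2 htg2
    hvg3 hgQ3 hge3 hbu3 hug3 huv3 hut3 htQ3 htg3
  have T3 := hcTransport (hFac (L n3) rF3) rv re rQ3 rQ4 hve heQ3 heQ4 hQF33 hQF43 neQ34
    hvg3 hgQ3 hge3 hbu3 hug3 huv3 hut3 htQ3 htg3
    hvg4 hgQ4 hge4 hbu4 hug4 huv4 hut4 htQ4 htg4
  have T4 := hcTransport (hFac (L n4) rF4) rv re rQ4 rQ0 hve heQ4 heQ0 hQF44 hQF04 neQ40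
    hvg4 hgQ4 hge4 hbu4 hug4 huv4 hut4 htQ4 htg4
    hvg0 hgQ0 hge0 hbu0 hug0 huv0 hut0 htQ0 htg0
  -- the common opposite edge
  have e01 : w0 = w1 := T0.1
  have e02 : w0 = w2 := e01.trans T1.1
  have e03 : w0 = w3 := e02.trans T2.1
  have e04 : w0 = w4 := e03.trans T3.1
  -- the two vertices of the common opposite edge
  have hbw : (⊥ : P.α) < w0 := by
    refine Ne.bot_lt fun h => ?_
    rw [h, P.rank_bot] at rw0; exact absurd rw0 (by decide)
  obtain ⟨A, B, hAB, hiff⟩ := P.diamond ⊥ w0 hbw (by rw [P.rank_bot]; omega)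
  have mm0 : u0 = A ∨ u0 = B := (hiff u0).1 ⟨hbu0, hut0⟩
  have mm1 : u1 = A ∨ u1 = B := (hiff u1).1 ⟨hbu1, by rw [e01]; exact hut1⟩
  have mm2 : u2 = A ∨ u2 = B := (hiff u2).1 ⟨hbu2, by rw [e02]; exact hut2⟩
  have mm3 : u3 = A ∨ u3 = B := (hiff u3).1 ⟨hbu3, by rw [e03]; exact hut3⟩
  have mm4 : u4 = A ∨ u4 = B := (hiff u4).1 ⟨hbu4, by rw [e04]; exact hut4⟩
  have d01 : u0 ≠ u1 := T0.2
  have d12 : u1 ≠ u2 := T1.2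
  have d23 : u2 ≠ u3 := T2.2
  have d34 : u3 ≠ u4 := T3.2
  have d40 : u4 ≠ u0 := T4.2
  rcases mm0 with h0 | h0 <;> rcases mm1 with h1 | h1 <;> rcases mm2 with h2 | h2 <;>
    rcases mm3 with h3 | h3 <;> rcases mm4 with h4 | h4 <;>
    first
      | exact d01 (h0.trans h1.symm)
      | exact d12 (h1.trans h2.symm)
      | exact d23 (h2.trans h3.symm)
      | exact d34 (h3.trans h4.symm)
      | exact d40 (h4.trans h0.symm)

end Main


set_option maxRecDepth 10000 in
set_option maxHeartbeats 1000000 in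
/-- There is no rank-4 abstract polytope all of whose facets are isomorphic to the
hemicube `{4,3}₃` and all of whose vertex figures are isomorphic to the icosahedron
`{3,5}`, and there is no rank-4 abstract polytope all of whose facets are isomorphic to
the hemicube `{4,3}₃` and all of whose vertex figures are isomorphic to the
hemi-icosahedron `{3,5}₅`. -/
theorem statement_7 :
    (¬ ∃ P : APolytope.{u} 4,
      P.FacetsAre HemicubePoset ∧ P.VertexFiguresAre IcosaPoset) ∧
    (¬ ∃ P : APolytope.{u} 4,
      P.FacetsAre HemicubePoset ∧ P.VertexFiguresAre HemiIcosaPoset) := by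
  constructor
  · rintro ⟨P, hFac, hVer⟩
    exact noGood (β := IcosaPoset) P hFac
      ⟨{0}, by decide⟩ ⟨Finset.univ, by decide⟩ ⟨{0, 1}, by decide⟩
      ⟨{0, 1, 3, 14}, by decide⟩ ⟨{0, 1, 2, 13}, by decide⟩ ⟨{0, 1, 7, 16}, by decide⟩
      ⟨{0, 1, 5, 15}, by decide⟩ ⟨{0, 1, 9, 17}, by decide⟩
      ⟨{0, 1, 2, 3, 13, 14, 18, 43}, by decide⟩ ⟨{0, 1, 2, 7, 13, 16, 20, 44}, by decide⟩
      ⟨{0, 1, 5, 7, 15, 16, 29, 46}, by decide⟩ ⟨{0, 1, 5, 9, 15, 17, 30, 47}, by decide⟩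
      ⟨{0, 1, 3, 9, 14, 17, 24, 45}, by decide⟩
      (by decide) (fun y => Subtype.coe_le_coe.1 (Finset.le_iff_subset.2 (Finset.subset_univ _)))
      (by decide)
      (by decide) (by decide) (by decide) (by decide) (by decide)
      (by decide) (by decide) (by decide) (by decide) (by decide)
      (by decide) (by decide) (by decide) (by decide) (by decide)
      (by decide) (by decide) (by decide) (by decide) (by decide)
      (by decide) (by decide) (by decide) (by decide) (by decide)
      hVer
  · rintro ⟨P, hFac, hVer⟩
    exact noGood (β := HemiIcosaPoset) P hFac
      ⟨{0}, by decide⟩ ⟨Finset.univ, by decide⟩ ⟨{0, 1}, by decide⟩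
      ⟨{0, 1, 3, 8}, by decide⟩ ⟨{0, 1, 2, 7}, by decide⟩ ⟨{0, 1, 4, 10}, by decide⟩
      ⟨{0, 1, 5, 9}, by decide⟩ ⟨{0, 1, 6, 11}, by decide⟩
      ⟨{0, 1, 2, 3, 7, 8, 12, 22}, by decide⟩ ⟨{0, 1, 2, 4, 7, 10, 14, 23}, by decide⟩
      ⟨{0, 1, 4, 5, 9, 10, 19, 25}, by decide⟩ ⟨{0, 1, 5, 6, 9, 11, 21, 26}, by decide⟩
      ⟨{0, 1, 3, 6, 8, 11, 18, 24}, by decide⟩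
      (by decide) (fun y => Subtype.coe_le_coe.1 (Finset.le_iff_subset.2 (Finset.subset_univ _)))
      (by decide)
      (by decide) (by decide) (by decide) (by decide) (by decide)
      (by decide) (by decide) (by decide) (by decide) (by decide)
      (by decide) (by decide) (by decide) (by decide) (by decide)
      (by decide) (by decide) (by decide) (by decide) (by decide)
      (by decide) (by decide) (by decide) (by decide) (by decide)
      hVer
end

section
/- Let G be the group presented on generators a, b, c, d with relators a², b², c², d², (ab)⁴, (bc)³, (cd)⁴, (ac)², (ad)², (bd)², and (bcd)³. Then G has order 192, and there exists a surjective homomorphism π : S₄ → S₃ (whose kernel is the Klein four-group) such that G is isomorphic to the semidirect product ((Fin 3 → ZMod 2) ⋊ S₄) where S₄ acts on Fin 3 → ZMod 2 by permuting coordinates through π. -/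
/-!
Write `a₁ = bab` and `a₂ = cbabc`. The relators make `a, a₁, a₂` pairwise commuting involutions
normalised by `b, c, d`, so `G = ⟨a, a₁, a₂⟩ ⟨b, c, d⟩` has at most `8 · 24` elements: the
generators `b, c, d` satisfy the relations of the automorphism group `S₄` of the hemi-octahedron,
and the same argument bounds `⟨b, c, d⟩ = ⟨d, cdc⟩ ⟨b, c⟩` by `4 · 6`. Conversely `G` maps onto
`(ℤ/2)³ ⋊ S₄`, of order 192, so that map is an isomorphism. The surjection `S₄ → S₃` is the action
on the three partitions of `{0, 1, 2, 3}` into two pairs; its kernel is the Klein four-group.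
-/

namespace Stmt9

/-- The generators `a`, `b`, `c`, `d` of the free group on four letters. -/
def a : FreeGroup (Fin 4) := FreeGroup.of 0
def b : FreeGroup (Fin 4) := FreeGroup.of 1
def c : FreeGroup (Fin 4) := FreeGroup.of 2
def d : FreeGroup (Fin 4) := FreeGroup.of 3

/-- Relators for the Coxeter group `[4,3,4]` together with the Petrie relator `(bcd)³`. -/
def rels : Set (FreeGroup (Fin 4)) :=
  {a ^ 2, b ^ 2, c ^ 2, d ^ 2, (a * b) ^ 4, (b * c) ^ 3, (c * d) ^ 4,
    (a * c) ^ 2, (a * d) ^ 2, (b * d) ^ 2, (b * c * d) ^ 3}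

/-- The group presented by the above relators. -/
abbrev G := PresentedGroup rels

/-- The images of the generators in `G`. -/
def ga : G := PresentedGroup.of 0
def gb : G := PresentedGroup.of 1
def gc : G := PresentedGroup.of 2
def gd : G := PresentedGroup.of 3

/-- The automorphism of `Multiplicative (Fin m → ZMod 2)` permuting coordinates by `σ`. -/
def coordAut {m : ℕ} (σ : Equiv.Perm (Fin m)) :
    MulAut (Multiplicative (Fin m → ZMod 2)) where
  toFun f := Multiplicative.ofAdd (Multiplicative.toAdd f ∘ σ.symm)
  invFun f := Multiplicative.ofAdd (Multiplicative.toAdd f ∘ σ)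
  left_inv f := by
    show Multiplicative.ofAdd ((Multiplicative.toAdd f ∘ ⇑σ.symm) ∘ ⇑σ) = f
    have : (Multiplicative.toAdd f ∘ ⇑σ.symm) ∘ ⇑σ = Multiplicative.toAdd f := by
      funext x; simp
    rw [this]; rfl
  right_inv f := by
    show Multiplicative.ofAdd ((Multiplicative.toAdd f ∘ ⇑σ) ∘ ⇑σ.symm) = f
    have : (Multiplicative.toAdd f ∘ ⇑σ) ∘ ⇑σ.symm = Multiplicative.toAdd f := by
      funext x; simp
    rw [this]; rfl
  map_mul' f g := rfl

/-- The action of `H` on `Multiplicative (Fin m → ZMod 2)` permuting coordinates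
through a homomorphism `π : H →* Equiv.Perm (Fin m)`. -/
def permAction {m : ℕ} {H : Type*} [Group H] (π : H →* Equiv.Perm (Fin m)) :
    H →* MulAut (Multiplicative (Fin m → ZMod 2)) where
  toFun h := coordAut (π h)
  map_one' := by
    ext f : 1
    show Multiplicative.ofAdd (Multiplicative.toAdd f ∘ ⇑(Equiv.symm (π 1))) = f
    rw [_root_.map_one π]
    rfl
  map_mul' h₁ h₂ := by
    ext f : 1
    show Multiplicative.ofAdd (Multiplicative.toAdd f ∘ ⇑(Equiv.symm (π (h₁ * h₂)))) = _
    rw [_root_.map_mul π]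
    rfl

end Stmt9

open Cardinal
open scoped Pointwise

section Involutions

variable {M : Type*} [Group M] {t u v x y z : M}

theorem inv_eq_self_of_sq_eq_one (hx : x ^ 2 = 1) : x⁻¹ = x :=
  inv_eq_of_mul_eq_one_right (by rw [← sq, hx])

theorem mul_pow_eq_one_comm {n : ℕ} (h : (x * y) ^ n = 1) : (y * x) ^ n = 1 := by
  rw [show y * x = x⁻¹ * (x * y) * x⁻¹⁻¹ by group, conj_pow, h]
  group

theorem commute_of_mul_sq_eq_one (hx : x ^ 2 = 1) (hy : y ^ 2 = 1) (h : (x * y) ^ 2 = 1) :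
    Commute x y :=
  calc x * y = (x * y) ^ 2 * (y⁻¹ * x⁻¹) := by simp only [pow_succ, pow_zero]; group
    _ = y * x := by rw [h, one_mul, inv_eq_self_of_sq_eq_one hx, inv_eq_self_of_sq_eq_one hy]

theorem mul_mul_eq_of_mul_pow_three_eq_one (hx : x ^ 2 = 1) (hy : y ^ 2 = 1)
    (h : (x * y) ^ 3 = 1) : x * y * x = y * x * y :=
  calc x * y * x = (x * y) ^ 3 * (y⁻¹ * x⁻¹ * y⁻¹) := by simp only [pow_succ, pow_zero]; group
    _ = y * x * y := by
      rw [h, one_mul, inv_eq_self_of_sq_eq_one hx, inv_eq_self_of_sq_eq_one hy]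

theorem commute_mul_mul_of_mul_pow_four_eq_one (hx : x ^ 2 = 1) (hy : y ^ 2 = 1)
    (h : (x * y) ^ 4 = 1) : Commute x (y * x * y) :=
  calc x * (y * x * y) = (x * y) ^ 4 * (y⁻¹ * x⁻¹ * y⁻¹ * x⁻¹) := by
        simp only [pow_succ, pow_zero]; group
    _ = y * x * y * x := by
      rw [h, one_mul, inv_eq_self_of_sq_eq_one hx, inv_eq_self_of_sq_eq_one hy]

theorem mul_mul_eq_of_commute (ht : t ^ 2 = 1) (h : Commute t u) : t * u * t = u := by
  rw [h.eq, mul_assoc, ← sq, ht, mul_one]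

theorem conj_conj_of_sq_eq_one (ht : t ^ 2 = 1) (u : M) : t * (t * u * t) * t = u :=
  calc t * (t * u * t) * t = t ^ 2 * u * t ^ 2 := by simp only [sq]; group
    _ = u := by rw [ht, one_mul, mul_one]

theorem conj_sq_eq_one (ht : t ^ 2 = 1) (hu : u ^ 2 = 1) : (t * u * t) ^ 2 = 1 := by
  rw [show t * u * t = t * u * t⁻¹ by rw [inv_eq_self_of_sq_eq_one ht], conj_pow, hu, mul_one,
    mul_inv_cancel]

theorem Commute.conj_of_sq_eq_one (h : Commute u v) (ht : t ^ 2 = 1) :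
    Commute (t * u * t) (t * v * t) := by
  simpa [inv_eq_self_of_sq_eq_one ht] using h.map (MulAut.conj t)

theorem mul_mul_mul_eq_of_petrie (hx : x ^ 2 = 1) (hy : y ^ 2 = 1) (hz : z ^ 2 = 1)
    (hxy : (x * y) ^ 3 = 1) (hxz : Commute x z) (hxyz : (x * y * z) ^ 3 = 1) :
    x * (y * z * y) * x = z * (y * z * y) := by
  have hcycle : x * y * z * (y * x * y) * z * y * z = 1 := by
    rw [← mul_mul_eq_of_mul_pow_three_eq_one hx hy hxy, ← hxyz]
    calc x * y * z * (x * y * x) * z * y * z = x * y * z * x * y * (x * z) * y * z := by group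
      _ = (x * y * z) ^ 3 := by rw [hxz.eq]; simp only [pow_succ, pow_zero]; group
  calc x * (y * z * y) * x
      = (x * y * z * (y * x * y) * z * y * z) * (z⁻¹ * y⁻¹ * z⁻¹ * y⁻¹) := by group
    _ = z * (y * z * y) := by
      rw [hcycle, one_mul, inv_eq_self_of_sq_eq_one hy, inv_eq_self_of_sq_eq_one hz]; group

end Involutions

namespace Subgroup

variable {M : Type*} [Group M]

theorem mk_sup_le_of_le_normalizer {N H : Subgroup M} (h : H ≤ normalizer (N : Set M)) :
    #↥(N ⊔ H) ≤ #N * #H :=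
  calc #↥(N ⊔ H) = #↥((N : Set M) * (H : Set M)) := by
        rw [← coe_mul_of_right_le_normalizer_left N H h]; rfl
    _ ≤ #N * #H := Cardinal.mk_mul_le

theorem mk_closure_singleton_le {x : M} {n : ℕ} (hn : n ≠ 0) (hx : x ^ n = 1) :
    #(closure {x}) ≤ n := by
  have : Finite (zpowers x) :=
    (isOfFinOrder_iff_pow_eq_one.2 ⟨n, Nat.pos_of_ne_zero hn, hx⟩).finite_zpowers.to_subtype
  rw [← zpowers_eq_closure, ← Nat.cast_card, Nat.card_zpowers]
  exact_mod_cast orderOf_le_of_pow_eq_one (Nat.pos_of_ne_zero hn) hx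

theorem closure_le_normalizer_closure {S T : Set M} (hT : ∀ t ∈ T, t ^ 2 = 1)
    (hST : ∀ t ∈ T, ∀ s ∈ S, t * s * t ∈ closure S) :
    closure T ≤ normalizer (closure S : Set M) := by
  rw [closure_le]
  intro t ht
  have ht' := inv_eq_self_of_sq_eq_one (hT t ht)
  have hconj : ∀ n ∈ closure S, t * n * t⁻¹ ∈ closure S := by
    intro n hn
    induction hn using closure_induction with
    | mem s hs => rw [ht']; exact hST t ht s hs
    | one => simp
    | mul x y _ _ hx hy => simpa [mul_assoc] using mul_mem hx hy
    | inv x _ hx => simpa [mul_assoc] using inv_mem hx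
  refine mem_normalizer_iff.2 fun n => ⟨hconj n, fun h => ?_⟩
  simpa only [ht', conj_conj_of_sq_eq_one (hT t ht)] using hconj _ h

theorem mk_closure_le_two_pow_card (S : Finset M) (hS : ∀ s ∈ S, s ^ 2 = 1)
    (hc : (S : Set M).Pairwise Commute) : #(closure (S : Set M)) ≤ 2 ^ S.card := by
  classical
  induction S using Finset.induction_on with
  | empty => simp
  | insert x S hx ih =>
    rw [Finset.coe_insert, Set.pairwise_insert_of_symm] at hc
    have hSx : closure {x} ≤ normalizer (closure (S : Set M) : Set M) := by
      refine closure_le_normalizer_closure (by simpa using hS x (by simp)) ?_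
      simp only [Set.mem_singleton_iff, forall_eq]
      intro s hs
      rw [mul_mul_eq_of_commute (hS x (by simp)) (hc.2 s hs (by rintro rfl; exact hx hs))]
      exact subset_closure hs
    rw [Finset.coe_insert]
    calc #(closure (insert x (S : Set M)))
        = #↥(closure (S : Set M) ⊔ closure {x}) := by
          rw [Set.insert_eq, closure_union, sup_comm]
      _ ≤ #(closure (S : Set M)) * #(closure {x}) := mk_sup_le_of_le_normalizer hSx
      _ ≤ 2 ^ S.card * 2 := by
          gcongr
          · exact ih (fun s hs => hS s (by simp [hs])) hc.1
          · exact_mod_cast mk_closure_singleton_le two_ne_zero (hS x (by simp))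
      _ = 2 ^ (insert x S).card := by rw [Finset.card_insert_of_notMem hx, pow_succ]

theorem mk_closure_pair_le_of_commute {x y : M} (hx : x ^ 2 = 1) (hy : y ^ 2 = 1)
    (h : Commute x y) : #(closure {x, y}) ≤ 4 := by
  classical
  have := mk_closure_le_two_pow_card {x, y} (by simp [hx, hy])
    (by push_cast; exact Set.pairwise_pair_of_symm.2 fun _ => h)
  push_cast at this
  calc _ ≤ _ := this
    _ ≤ (2 : Cardinal) ^ 2 := by exact_mod_cast Nat.pow_le_pow_right two_pos Finset.card_le_two
    _ = 4 := by norm_num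

theorem mk_closure_triple_le_of_commute {x y z : M} (hx : x ^ 2 = 1) (hy : y ^ 2 = 1)
    (hz : z ^ 2 = 1) (hxy : Commute x y) (hxz : Commute x z) (hyz : Commute y z) :
    #(closure {x, y, z}) ≤ 8 := by
  classical
  have hc : ({x, y, z} : Set M).Pairwise Commute := by
    refine Set.pairwise_insert_of_symm.2 ⟨Set.pairwise_pair_of_symm.2 fun _ => hyz, ?_⟩
    simp only [Set.mem_insert_iff, Set.mem_singleton_iff]
    rintro _ (rfl | rfl) _
    exacts [hxy, hxz]
  have := mk_closure_le_two_pow_card {x, y, z} (by simp [hx, hy, hz]) (by push_cast; exact hc)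
  push_cast at this
  calc _ ≤ _ := this
    _ ≤ (2 : Cardinal) ^ 3 := by exact_mod_cast Nat.pow_le_pow_right two_pos Finset.card_le_three
    _ = 8 := by norm_num

theorem mk_closure_pair_le_of_mul_pow_eq_one {x y : M} {n : ℕ} (hx : x ^ 2 = 1) (hy : y ^ 2 = 1)
    (hn : n ≠ 0) (hxy : (x * y) ^ n = 1) : #(closure {x, y}) ≤ 2 * n := by
  have hnorm : closure {x} ≤ normalizer (closure {x * y} : Set M) := by
    refine closure_le_normalizer_closure (by simpa using hx) ?_
    simp only [Set.mem_singleton_iff, forall_eq]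
    have hinv : x * (x * y) * x = (x * y)⁻¹ := by
      rw [mul_inv_rev, inv_eq_self_of_sq_eq_one hx, inv_eq_self_of_sq_eq_one hy, ← mul_assoc,
        ← sq, hx, one_mul]
    rw [hinv]
    exact inv_mem (subset_closure rfl)
  have hle : closure {x, y} ≤ closure {x * y} ⊔ closure {x} := by
    have hx_mem : x ∈ closure {x * y} ⊔ closure {x} := mem_sup_right (subset_closure rfl)
    have hxy_mem : x * y ∈ closure {x * y} ⊔ closure {x} := mem_sup_left (subset_closure rfl)
    have hy_mem := mul_mem hx_mem hxy_mem
    rw [← mul_assoc, ← sq, hx, one_mul] at hy_mem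
    rw [closure_le, Set.insert_subset_iff, Set.singleton_subset_iff]
    exact ⟨hx_mem, hy_mem⟩
  calc #(closure {x, y}) ≤ #↥(closure {x * y} ⊔ closure {x}) := Cardinal.mk_le_mk_of_subset hle
    _ ≤ #(closure {x * y}) * #(closure {x}) := mk_sup_le_of_le_normalizer hnorm
    _ ≤ n * 2 := by
        gcongr
        · exact mk_closure_singleton_le hn hxy
        · exact_mod_cast mk_closure_singleton_le two_ne_zero hx
    _ = 2 * n := mul_comm _ _

theorem mk_closure_le_of_hemioctahedron_relations {x y z : M} (hx : x ^ 2 = 1) (hy : y ^ 2 = 1)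
    (hz : z ^ 2 = 1) (hxy : (x * y) ^ 3 = 1) (hyz : (y * z) ^ 4 = 1) (hxz : (x * z) ^ 2 = 1)
    (hxyz : (x * y * z) ^ 3 = 1) : #(closure {x, y, z}) ≤ 24 := by
  have hxz' := commute_of_mul_sq_eq_one hx hz hxz
  have hnorm : closure {x, y} ≤ normalizer (closure {z, y * z * y} : Set M) := by
    refine closure_le_normalizer_closure (by simp [hx, hy]) ?_
    simp only [Set.forall_mem_insert, Set.mem_singleton_iff, forall_eq]
    refine ⟨⟨?_, ?_⟩, ?_, ?_⟩
    · rw [mul_mul_eq_of_commute hx hxz']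
      exact subset_closure (by simp)
    · rw [mul_mul_mul_eq_of_petrie hx hy hz hxy hxz' hxyz]
      exact mul_mem (subset_closure (by simp)) (subset_closure (by simp))
    · exact subset_closure (by simp)
    · rw [conj_conj_of_sq_eq_one hy]
      exact subset_closure (by simp)
  have hle : closure {x, y, z} ≤ closure {z, y * z * y} ⊔ closure {x, y} := by
    rw [closure_le, Set.insert_subset_iff, Set.insert_subset_iff, Set.singleton_subset_iff]
    exact ⟨mem_sup_right (subset_closure (by simp)), mem_sup_right (subset_closure (by simp)),
      mem_sup_left (subset_closure (by simp))⟩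
  calc #(closure {x, y, z}) ≤ #↥(closure {z, y * z * y} ⊔ closure {x, y}) :=
        Cardinal.mk_le_mk_of_subset hle
    _ ≤ #(closure {z, y * z * y}) * #(closure {x, y}) := mk_sup_le_of_le_normalizer hnorm
    _ ≤ 4 * (2 * 3) := by
        gcongr
        · exact mk_closure_pair_le_of_commute hz (conj_sq_eq_one hy hz)
            (commute_mul_mul_of_mul_pow_four_eq_one hz hy (mul_pow_eq_one_comm hyz))
        · exact_mod_cast mk_closure_pair_le_of_mul_pow_eq_one hx hy three_ne_zero hxy
    _ = 24 := by norm_num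

end Subgroup

namespace Stmt9

open Subgroup

theorem ga_sq : ga ^ 2 = 1 := PresentedGroup.one_of_mem (x := a ^ 2) (by simp [rels])
theorem gb_sq : gb ^ 2 = 1 := PresentedGroup.one_of_mem (x := b ^ 2) (by simp [rels])
theorem gc_sq : gc ^ 2 = 1 := PresentedGroup.one_of_mem (x := c ^ 2) (by simp [rels])
theorem gd_sq : gd ^ 2 = 1 := PresentedGroup.one_of_mem (x := d ^ 2) (by simp [rels])
theorem ga_mul_gb_pow : (ga * gb) ^ 4 = 1 :=
  PresentedGroup.one_of_mem (x := (a * b) ^ 4) (by simp [rels])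
theorem gb_mul_gc_pow : (gb * gc) ^ 3 = 1 :=
  PresentedGroup.one_of_mem (x := (b * c) ^ 3) (by simp [rels])
theorem gc_mul_gd_pow : (gc * gd) ^ 4 = 1 :=
  PresentedGroup.one_of_mem (x := (c * d) ^ 4) (by simp [rels])
theorem ga_mul_gc_sq : (ga * gc) ^ 2 = 1 :=
  PresentedGroup.one_of_mem (x := (a * c) ^ 2) (by simp [rels])
theorem ga_mul_gd_sq : (ga * gd) ^ 2 = 1 :=
  PresentedGroup.one_of_mem (x := (a * d) ^ 2) (by simp [rels])
theorem gb_mul_gd_sq : (gb * gd) ^ 2 = 1 :=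
  PresentedGroup.one_of_mem (x := (b * d) ^ 2) (by simp [rels])
theorem gb_mul_gc_mul_gd_pow : (gb * gc * gd) ^ 3 = 1 :=
  PresentedGroup.one_of_mem (x := (b * c * d) ^ 3) (by simp [rels])

theorem commute_ga_gc : Commute ga gc := commute_of_mul_sq_eq_one ga_sq gc_sq ga_mul_gc_sq
theorem commute_ga_gd : Commute ga gd := commute_of_mul_sq_eq_one ga_sq gd_sq ga_mul_gd_sq
theorem commute_gb_gd : Commute gb gd := commute_of_mul_sq_eq_one gb_sq gd_sq gb_mul_gd_sq

def a₁ : G := gb * ga * gb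
def a₂ : G := gc * a₁ * gc

theorem commute_ga_a₁ : Commute ga a₁ :=
  commute_mul_mul_of_mul_pow_four_eq_one ga_sq gb_sq ga_mul_gb_pow

theorem commute_ga_a₂ : Commute ga a₂ :=
  (commute_ga_gc.mul_right commute_ga_a₁).mul_right commute_ga_gc

theorem gb_mul_a₂_mul_gb : gb * a₂ * gb = a₂ :=
  calc gb * a₂ * gb = (gb * gc * gb) * ga * (gb * gc * gb) := by simp only [a₂, a₁]; group
    _ = (gc * gb * gc) * ga * (gc * gb * gc) := by
        rw [mul_mul_eq_of_mul_pow_three_eq_one gb_sq gc_sq gb_mul_gc_pow]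
    _ = gc * gb * (gc * ga * gc) * gb * gc := by group
    _ = a₂ := by
        rw [mul_mul_eq_of_commute gc_sq commute_ga_gc.symm]; simp only [a₂, a₁, mul_assoc]

theorem commute_a₁_a₂ : Commute a₁ a₂ := by
  have h := commute_ga_a₂.conj_of_sq_eq_one gb_sq
  rwa [gb_mul_a₂_mul_gb] at h

theorem commute_gd_a₁ : Commute gd a₁ :=
  (commute_gb_gd.symm.mul_right commute_ga_gd.symm).mul_right commute_gb_gd.symm

theorem commute_gd_a₂ : Commute gd a₂ := by
  have h₁ : Commute ga (gb * (gc * gd * gc) * gb) := by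
    rw [mul_mul_mul_eq_of_petrie gb_sq gc_sq gd_sq gb_mul_gc_pow commute_gb_gd
      gb_mul_gc_mul_gd_pow]
    exact commute_ga_gd.mul_right ((commute_ga_gc.mul_right commute_ga_gd).mul_right commute_ga_gc)
  have h₂ : Commute a₁ (gc * gd * gc) := by
    have h := h₁.conj_of_sq_eq_one gb_sq
    rwa [conj_conj_of_sq_eq_one gb_sq] at h
  have h₃ : Commute a₂ gd := by
    have h := h₂.conj_of_sq_eq_one gc_sq
    rwa [conj_conj_of_sq_eq_one gc_sq] at h
  exact h₃.symm

theorem closure_gb_gc_gd_le_normalizer :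
    closure {gb, gc, gd} ≤ normalizer (closure {ga, a₁, a₂} : Set G) := by
  refine closure_le_normalizer_closure (by simp [gb_sq, gc_sq, gd_sq]) ?_
  simp only [Set.forall_mem_insert, Set.mem_singleton_iff, forall_eq]
  refine ⟨⟨?_, ?_, ?_⟩, ⟨?_, ?_, ?_⟩, ?_, ?_, ?_⟩
  · exact subset_closure (by simp [a₁])
  · rw [show a₁ = gb * ga * gb from rfl, conj_conj_of_sq_eq_one gb_sq]
    exact subset_closure (by simp)
  · rw [gb_mul_a₂_mul_gb]; exact subset_closure (by simp)
  · rw [mul_mul_eq_of_commute gc_sq commute_ga_gc.symm]; exact subset_closure (by simp)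
  · exact subset_closure (by simp [a₂])
  · rw [show a₂ = gc * a₁ * gc from rfl, conj_conj_of_sq_eq_one gc_sq]
    exact subset_closure (by simp)
  · rw [mul_mul_eq_of_commute gd_sq commute_ga_gd.symm]; exact subset_closure (by simp)
  · rw [mul_mul_eq_of_commute gd_sq commute_gd_a₁]; exact subset_closure (by simp)
  · rw [mul_mul_eq_of_commute gd_sq commute_gd_a₂]; exact subset_closure (by simp)

theorem closure_sup_closure_eq_top : closure {ga, a₁, a₂} ⊔ closure {gb, gc, gd} = ⊤ := by
  rw [eq_top_iff, ← PresentedGroup.closure_range_of, closure_le]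
  rintro _ ⟨i, rfl⟩
  fin_cases i
  · exact mem_sup_left (subset_closure (by simp [ga]))
  · exact mem_sup_right (subset_closure (by simp [gb]))
  · exact mem_sup_right (subset_closure (by simp [gc]))
  · exact mem_sup_right (subset_closure (by simp [gd]))

theorem mk_G_le : #G ≤ 192 :=
  calc #G = #(⊤ : Subgroup G) := (Cardinal.mk_congr Subgroup.topEquiv.toEquiv).symm
    _ = #↥(closure {ga, a₁, a₂} ⊔ closure {gb, gc, gd}) := by rw [closure_sup_closure_eq_top]
    _ ≤ #(closure {ga, a₁, a₂}) * #(closure {gb, gc, gd}) :=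
        mk_sup_le_of_le_normalizer closure_gb_gc_gd_le_normalizer
    _ ≤ 8 * 24 := by
        gcongr
        · exact mk_closure_triple_le_of_commute ga_sq (conj_sq_eq_one gb_sq ga_sq)
            (conj_sq_eq_one gc_sq (conj_sq_eq_one gb_sq ga_sq)) commute_ga_a₁ commute_ga_a₂
            commute_a₁_a₂
        · exact mk_closure_le_of_hemioctahedron_relations gb_sq gc_sq gd_sq gb_mul_gc_pow
            gc_mul_gd_pow gb_mul_gd_sq gb_mul_gc_mul_gd_pow
    _ = 192 := by norm_num

theorem finite_G : Finite G :=
  Cardinal.mk_lt_aleph0_iff.1 (mk_G_le.trans_lt Cardinal.natCast_lt_aleph0)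

theorem card_G_le : Nat.card G ≤ 192 := by
  have := finite_G
  exact_mod_cast (Nat.cast_card (α := G)).trans_le mk_G_le

open Equiv SemidirectProduct

/-- Identifying `Fin 4` with `(ℤ/2)²` through binary digits, the partition `{{x, y}, {x, y}ᶜ}`
is determined by `x ^^^ y ∈ {1, 2, 3}`; it gets the index `(x ^^^ y) - 1`. The value for `x = y`
is meaningless. -/
def pairPartition (x y : Fin 4) : Fin 3 := ⟨((x.val ^^^ y.val) + 2) % 3, Nat.mod_lt _ (by norm_num)⟩

/-- The partition with index `i` pairs `0` with `i + 1`, so `resolventFun σ` is the action of `σ`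
on the three partitions. -/
def resolventFun (σ : Perm (Fin 4)) (i : Fin 3) : Fin 3 := pairPartition (σ 0) (σ i.succ)

theorem resolventFun_inv_apply :
    ∀ (σ : Perm (Fin 4)) (i : Fin 3), resolventFun σ⁻¹ (resolventFun σ i) = i := by
  decide

theorem resolventFun_mul : ∀ (σ τ : Perm (Fin 4)) (i : Fin 3),
    resolventFun (σ * τ) i = resolventFun σ (resolventFun τ i) := by
  decide

def resolvent : Perm (Fin 4) →* Perm (Fin 3) where
  toFun σ := ⟨resolventFun σ, resolventFun σ⁻¹, resolventFun_inv_apply σ,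
    fun i => by simpa only [inv_inv] using resolventFun_inv_apply σ⁻¹ i⟩
  map_one' := Equiv.ext (by decide)
  map_mul' σ τ := Equiv.ext (resolventFun_mul σ τ)

theorem resolvent_surjective : Function.Surjective resolvent := by decide

instance : IsKleinFour resolvent.ker where
  card_four := by rw [Nat.card_eq_fintype_card]; decide
  exponent_two := by
    have hsq : ∀ σ : Perm (Fin 4), resolvent σ = 1 → σ ^ 2 = 1 := by decide
    have : Nontrivial resolvent.ker :=
      ⟨⟨1, ⟨swap 0 1 * swap 2 3, by decide⟩, ne_of_apply_ne Subtype.val (by decide)⟩⟩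
    rw [Monoid.exponent_eq_prime_iff Nat.prime_two]
    rintro ⟨σ, hσ⟩ hne
    exact orderOf_eq_prime (Subtype.ext (hsq σ hσ)) hne

abbrev K := Multiplicative (Fin 3 → ZMod 2) ⋊[permAction resolvent] Perm (Fin 4)

instance : DecidableEq K := fun _ _ => decidable_of_iff _ SemidirectProduct.ext_iff.symm

theorem card_K : Nat.card K = 192 := by
  rw [SemidirectProduct.card, Nat.card_eq_fintype_card, Nat.card_eq_fintype_card]; decide

def kGen : Fin 4 → K :=
  ![⟨Multiplicative.ofAdd (Pi.single 2 1), swap 0 3 * swap 1 2⟩, inr (swap 2 3), inr (swap 1 2),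
    inr (swap 0 1 * swap 2 3)]

theorem kGen_rels : ∀ r ∈ rels, FreeGroup.lift kGen r = 1 := by
  intro r hr
  simp only [rels, Set.mem_insert_iff, Set.mem_singleton_iff] at hr
  rcases hr with h|h|h|h|h|h|h|h|h|h|h <;> subst h <;>
    simp only [a, b, c, d, map_pow, map_mul, FreeGroup.lift_apply_of] <;> decide

def toK : G →* K := PresentedGroup.toGroup kGen_rels

theorem toK_of (i : Fin 4) : toK (PresentedGroup.of i) = kGen i :=
  PresentedGroup.toGroup.of kGen_rels

theorem eq_top_of_inr_mem_of_inl_mem (R : Subgroup K) (hinr : ∀ σ, inr σ ∈ R)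
    (hinl : inl (Multiplicative.ofAdd (Pi.single 2 1)) ∈ R) : R = ⊤ := by
  have hsingle : ∀ i : Fin 3, inl (Multiplicative.ofAdd (Pi.single i 1)) ∈ R := by
    intro i
    obtain ⟨σ, hσ⟩ : ∃ σ : Perm (Fin 4),
        permAction resolvent σ (Multiplicative.ofAdd (Pi.single 2 1)) =
          Multiplicative.ofAdd (Pi.single i 1) := by
      revert i; decide
    rw [← hσ, inl_aut]
    exact mul_mem (mul_mem (hinr σ) hinl) (hinr _)
  have hinl_all : ∀ v, v ∈ R.comap inl := by
    intro v
    rw [show v = ∏ i, Multiplicative.ofAdd (Pi.single i 1) ^ (Multiplicative.toAdd v i).val by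
      revert v; decide]
    exact prod_mem fun i _ => pow_mem (mem_comap.2 (hsingle i)) _
  refine (eq_top_iff' R).2 fun ⟨v, σ⟩ => ?_
  rw [mk_eq_inl_mul_inr]
  exact mul_mem (hinl_all v) (hinr σ)

theorem toK_surjective : Function.Surjective toK := by
  have hinr : ∀ σ, inr σ ∈ toK.range := by
    have hswap :
        closure (Set.range fun i : Fin 3 => swap i.castSucc i.succ) ≤ toK.range.comap inr := by
      rw [closure_le]
      rintro _ ⟨i, rfl⟩
      fin_cases i
      · exact ⟨gd * gb, by rw [map_mul, gd, gb, toK_of, toK_of]; decide⟩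
      · exact ⟨gc, by rw [gc, toK_of]; decide⟩
      · exact ⟨gb, by rw [gb, toK_of]; decide⟩
    rw [closure_eq_top_of_mclosure_eq_top (Perm.mclosure_swap_castSucc_succ 3)] at hswap
    exact fun σ => hswap (mem_top σ)
  have hinl : inl (Multiplicative.ofAdd (Pi.single 2 1)) =
      toK ga * (inr (swap 0 3 * swap 1 2))⁻¹ := by
    rw [ga, toK_of]; decide
  rw [← MonoidHom.range_eq_top]
  refine eq_top_of_inr_mem_of_inl_mem _ hinr ?_
  rw [hinl]
  exact mul_mem ⟨ga, rfl⟩ (inv_mem (hinr _))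

/-- The group presented on `a, b, c, d` with relators `a², b², c², d², (ab)⁴, (bc)³,
`(cd)⁴, (ac)², (ad)², (bd)²` and `(bcd)³` has order 192, and there is a surjection
`π : S₄ → S₃` with kernel the Klein four-group such that the group is isomorphic to
`(Fin 3 → ZMod 2) ⋊ S₄`, `S₄` acting by permuting coordinates through `π`. -/
theorem statement_9 :
    Nat.card G = 192 ∧
    ∃ π : Equiv.Perm (Fin 4) →* Equiv.Perm (Fin 3),
      Function.Surjective π ∧
      Nonempty (π.ker ≃* Multiplicative (ZMod 2 × ZMod 2)) ∧
      Nonempty (G ≃*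
        (Multiplicative (Fin 3 → ZMod 2)) ⋊[permAction π] Equiv.Perm (Fin 4)) := by
  have := finite_G
  have hcard : Nat.card G = Nat.card K :=
    le_antisymm (card_G_le.trans card_K.ge) (Nat.card_le_card_of_surjective _ toK_surjective)
  have hbij : Function.Bijective toK :=
    (Nat.bijective_iff_surjective_and_card toK).2 ⟨toK_surjective, hcard⟩
  exact ⟨hcard.trans card_K, resolvent, resolvent_surjective, IsKleinFour.nonempty_mulEquiv,
    ⟨MulEquiv.ofBijective toK hbij⟩⟩

end Stmt9
end

section
/- There is no group G generated by r₀, r₁, r₂, r₃, each of order 2, satisfying (r₀r₁)⁴ = (r₁r₂)³ = (r₂r₃)⁵ = 1, (r₀r₂)² = (r₀r₃)² = (r₁r₃)² = 1, and (r₀r₁r₂)³ = 1, such that the subgroup generated by {r₀, r₁, r₂} has order 24, the subgroup generated by {r₁, r₂, r₃} either has order 60 and satisfies (r₁r₂r₃)⁵ = 1 or has order 120, and the intersection of the subgroups generated by {r₀, r₁, r₂} and by {r₁, r₂, r₃} equals the subgroup generated by {r₁, r₂}. -/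
universe u

private lemma sq_one_comm {G : Type u} [Group G] {x y : G}
    (hx : x * x = 1) (hy : y * y = 1) (h : (x * y) ^ 2 = 1) : x * y = y * x := by
  have h' : (x * y) * (x * y) = 1 := by rw [← sq]; exact h
  have hxy : x * y = (x * y)⁻¹ := eq_inv_of_mul_eq_one_left h'
  have hxi : x⁻¹ = x := inv_eq_of_mul_eq_one_right hx
  have hyi : y⁻¹ = y := inv_eq_of_mul_eq_one_right hy
  calc x * y = (x * y)⁻¹ := hxy
    _ = y⁻¹ * x⁻¹ := by rw [mul_inv_rev]
    _ = y * x := by rw [hxi, hyi]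

/-- There is no group `G` with generators `r₀, r₁, r₂, r₃` (generating `G`), each of
order 2, satisfying `(r₀r₁)⁴ = (r₁r₂)³ = (r₂r₃)⁵ = 1`,
`(r₀r₂)² = (r₀r₃)² = (r₁r₃)² = 1`, and `(r₀r₁r₂)³ = 1`, such that the subgroup
generated by `{r₀, r₁, r₂}` has order 24, the subgroup generated by `{r₁, r₂, r₃}`
has order 60 together with `(r₁r₂r₃)⁵ = 1` (or, alternatively, has order 120), and the
intersection of the subgroups generated by `{r₀, r₁, r₂}` and by `{r₁, r₂, r₃}` equals
the subgroup generated by `{r₁, r₂}`. -/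
theorem statement_17 (G : Type u) [Group G] (r₀ r₁ r₂ r₃ : G) :
    ¬ (Subgroup.closure {r₀, r₁, r₂, r₃} = (⊤ : Subgroup G) ∧
      orderOf r₀ = 2 ∧ orderOf r₁ = 2 ∧ orderOf r₂ = 2 ∧ orderOf r₃ = 2 ∧
      (r₀ * r₁) ^ 4 = 1 ∧ (r₁ * r₂) ^ 3 = 1 ∧ (r₂ * r₃) ^ 5 = 1 ∧
      (r₀ * r₂) ^ 2 = 1 ∧ (r₀ * r₃) ^ 2 = 1 ∧ (r₁ * r₃) ^ 2 = 1 ∧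
      (r₀ * r₁ * r₂) ^ 3 = 1 ∧
      Nat.card (Subgroup.closure {r₀, r₁, r₂}) = 24 ∧
      ((Nat.card (Subgroup.closure {r₁, r₂, r₃}) = 60 ∧ (r₁ * r₂ * r₃) ^ 5 = 1) ∨
        Nat.card (Subgroup.closure {r₁, r₂, r₃}) = 120) ∧
      Subgroup.closure {r₀, r₁, r₂} ⊓ Subgroup.closure {r₁, r₂, r₃} =
        Subgroup.closure {r₁, r₂}) := by
  rintro ⟨-, h0, h1, h2, h3, -, h12, h23, h02, h03, h13, h012, -, -, -⟩
  -- involutions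
  have i0 : r₀ * r₀ = 1 := by
    have := pow_orderOf_eq_one r₀; rw [h0, sq] at this; exact this
  have i1 : r₁ * r₁ = 1 := by
    have := pow_orderOf_eq_one r₁; rw [h1, sq] at this; exact this
  have i2 : r₂ * r₂ = 1 := by
    have := pow_orderOf_eq_one r₂; rw [h2, sq] at this; exact this
  have i3 : r₃ * r₃ = 1 := by
    have := pow_orderOf_eq_one r₃; rw [h3, sq] at this; exact this
  have inv0 : r₀⁻¹ = r₀ := inv_eq_of_mul_eq_one_right i0
  have inv1 : r₁⁻¹ = r₁ := inv_eq_of_mul_eq_one_right i1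
  have inv2 : r₂⁻¹ = r₂ := inv_eq_of_mul_eq_one_right i2
  have inv3 : r₃⁻¹ = r₃ := inv_eq_of_mul_eq_one_right i3
  -- commutation relations
  have c02 : r₀ * r₂ = r₂ * r₀ := sq_one_comm i0 i2 h02
  have c03 : r₀ * r₃ = r₃ * r₀ := sq_one_comm i0 i3 h03
  have c13 : r₁ * r₃ = r₃ * r₁ := sq_one_comm i1 i3 h13
  -- expanded power relations
  have h12' : r₁ * r₂ * (r₁ * r₂) * (r₁ * r₂) = 1 := by
    have h' := h12; rw [pow_succ, pow_succ, pow_one] at h'; exact h'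
  have h012' : r₀ * r₁ * r₂ * (r₀ * r₁ * r₂) * (r₀ * r₁ * r₂) = 1 := by
    have h' := h012; rw [pow_succ, pow_succ, pow_one] at h'; exact h'
  have h23' : r₂ * r₃ * (r₂ * r₃) * (r₂ * r₃) * (r₂ * r₃) * (r₂ * r₃) = 1 := by
    have h' := h23; rw [pow_succ, pow_succ, pow_succ, pow_succ, pow_one] at h'; exact h'
  -- braid relation from (r₁ r₂)³ = 1
  have br : r₂ * r₁ * r₂ = r₁ * r₂ * r₁ := by
    have h'' : (r₂ * r₁ * r₂) * (r₁ * r₂ * r₁) = 1 := by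
      calc (r₂ * r₁ * r₂) * (r₁ * r₂ * r₁)
          = r₂ * (r₁ * r₂ * (r₁ * r₂) * (r₁ * r₂)) * r₂⁻¹ := by group
        _ = r₂ * (1 : G) * r₂⁻¹ := by rw [h12']
        _ = 1 := by group
    have heq := eq_inv_of_mul_eq_one_left h''
    calc r₂ * r₁ * r₂ = (r₁ * r₂ * r₁)⁻¹ := heq
      _ = r₁⁻¹ * (r₂⁻¹ * r₁⁻¹) := by group
      _ = r₁ * (r₂ * r₁) := by rw [inv1, inv2]
      _ = r₁ * r₂ * r₁ := by group
  -- key identity (A): (r₀r₁)² = r₂ r₁ r₀ r₁ r₂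
  have s1 : r₀ * r₁ * r₂ * (r₀ * r₁ * r₂) = r₂ * r₁ * r₀ := by
    have h' : (r₀ * r₁ * r₂ * (r₀ * r₁ * r₂)) * (r₀ * r₁ * r₂) = 1 := by
      calc (r₀ * r₁ * r₂ * (r₀ * r₁ * r₂)) * (r₀ * r₁ * r₂)
          = r₀ * r₁ * r₂ * (r₀ * r₁ * r₂) * (r₀ * r₁ * r₂) := by group
        _ = 1 := h012'
    have heq := eq_inv_of_mul_eq_one_left h'
    calc r₀ * r₁ * r₂ * (r₀ * r₁ * r₂) = (r₀ * r₁ * r₂)⁻¹ := heq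
      _ = r₂⁻¹ * (r₁⁻¹ * r₀⁻¹) := by group
      _ = r₂ * (r₁ * r₀) := by rw [inv0, inv1, inv2]
      _ = r₂ * r₁ * r₀ := by group
  have s2 : r₀ * r₁ * r₀ * (r₁ * r₂ * r₁) = r₂ * r₁ * r₀ := by
    calc r₀ * r₁ * r₀ * (r₁ * r₂ * r₁)
        = r₀ * r₁ * r₀ * (r₂ * r₁ * r₂) := by rw [br]
      _ = r₀ * r₁ * (r₀ * r₂) * r₁ * r₂ := by group
      _ = r₀ * r₁ * (r₂ * r₀) * r₁ * r₂ := by rw [c02]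
      _ = r₀ * r₁ * r₂ * (r₀ * r₁ * r₂) := by group
      _ = r₂ * r₁ * r₀ := s1
  have hA : r₀ * r₁ * r₀ * r₁ = r₂ * r₁ * r₀ * r₁ * r₂ := by
    calc r₀ * r₁ * r₀ * r₁
        = (r₀ * r₁ * r₀ * (r₁ * r₂ * r₁)) * (r₁⁻¹ * r₂⁻¹) := by group
      _ = (r₂ * r₁ * r₀) * (r₁⁻¹ * r₂⁻¹) := by rw [s2]
      _ = (r₂ * r₁ * r₀) * (r₁ * r₂) := by rw [inv1, inv2]
      _ = r₂ * r₁ * r₀ * r₁ * r₂ := by group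
  -- r₃ commutes with (r₀ r₁)²
  have C30 : Commute r₃ r₀ := c03.symm
  have C31 : Commute r₃ r₁ := c13.symm
  have hB0 : Commute r₃ (r₀ * r₁ * r₀ * r₁) :=
    ((C30.mul_right C31).mul_right C30).mul_right C31
  have hB : r₃ * (r₂ * r₁ * r₀ * r₁ * r₂) = (r₂ * r₁ * r₀ * r₁ * r₂) * r₃ := by
    rw [← hA]; exact hB0.eq
  -- r₀ commutes with a := r₁ r₂ r₃ r₂ r₁
  have ha : (r₁ * r₂ * r₃ * r₂ * r₁) * r₀ = r₀ * (r₁ * r₂ * r₃ * r₂ * r₁) := by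
    calc (r₁ * r₂ * r₃ * r₂ * r₁) * r₀
        = (r₁ * r₂) * (r₃ * (r₂ * r₁ * r₀ * r₁ * r₂)) * (r₂⁻¹ * r₁⁻¹) := by group
      _ = (r₁ * r₂) * ((r₂ * r₁ * r₀ * r₁ * r₂) * r₃) * (r₂⁻¹ * r₁⁻¹) := by rw [hB]
      _ = r₁ * (r₂ * r₂) * (r₁ * r₀ * r₁ * r₂ * r₃ * (r₂⁻¹ * r₁⁻¹)) := by group
      _ = r₁ * (1 : G) * (r₁ * r₀ * r₁ * r₂ * r₃ * (r₂⁻¹ * r₁⁻¹)) := by rw [i2]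
      _ = (r₁ * r₁) * (r₀ * r₁ * r₂ * r₃ * (r₂⁻¹ * r₁⁻¹)) := by group
      _ = (1 : G) * (r₀ * r₁ * r₂ * r₃ * (r₂⁻¹ * r₁⁻¹)) := by rw [i1]
      _ = r₀ * (r₁ * r₂ * r₃ * r₂⁻¹ * r₁⁻¹) := by group
      _ = r₀ * (r₁ * r₂ * r₃ * r₂ * r₁) := by rw [inv1, inv2]
  -- pentagon: (r₂ r₃)⁴ = r₃ r₂
  have pent : r₂ * r₃ * (r₂ * r₃) * (r₂ * r₃) * (r₂ * r₃) = r₃ * r₂ := by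
    have heq := eq_inv_of_mul_eq_one_left h23'
    calc r₂ * r₃ * (r₂ * r₃) * (r₂ * r₃) * (r₂ * r₃) = (r₂ * r₃)⁻¹ := heq
      _ = r₃⁻¹ * r₂⁻¹ := by rw [mul_inv_rev]
      _ = r₃ * r₂ := by rw [inv2, inv3]
  -- the word identity (D): r₂ r₃ a r₃ a r₃ r₂ = r₁  with a = r₁ r₂ r₃ r₂ r₁
  have d1 : (r₁ * r₂ * r₃ * r₂ * r₁) * r₃ = r₁ * r₂ * r₃ * r₂ * r₃ * r₁ := by
    calc (r₁ * r₂ * r₃ * r₂ * r₁) * r₃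
        = r₁ * r₂ * r₃ * r₂ * (r₁ * r₃) := by group
      _ = r₁ * r₂ * r₃ * r₂ * (r₃ * r₁) := by rw [c13]
      _ = r₁ * r₂ * r₃ * r₂ * r₃ * r₁ := by group
  have d2 : (r₁ * r₂ * r₃ * r₂ * r₁) * r₃ * (r₁ * r₂ * r₃ * r₂ * r₁) * r₃
      = r₁ * (r₃ * r₂) * r₁ := by
    calc (r₁ * r₂ * r₃ * r₂ * r₁) * r₃ * (r₁ * r₂ * r₃ * r₂ * r₁) * r₃
        = ((r₁ * r₂ * r₃ * r₂ * r₁) * r₃) * ((r₁ * r₂ * r₃ * r₂ * r₁) * r₃) := by group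
      _ = (r₁ * r₂ * r₃ * r₂ * r₃ * r₁) * (r₁ * r₂ * r₃ * r₂ * r₃ * r₁) := by rw [d1]
      _ = r₁ * r₂ * r₃ * r₂ * r₃ * (r₁ * r₁) * (r₂ * r₃ * (r₂ * r₃) * r₁) := by group
      _ = r₁ * r₂ * r₃ * r₂ * r₃ * (1 : G) * (r₂ * r₃ * (r₂ * r₃) * r₁) := by rw [i1]
      _ = r₁ * (r₂ * r₃ * (r₂ * r₃) * (r₂ * r₃) * (r₂ * r₃)) * r₁ := by group
      _ = r₁ * (r₃ * r₂) * r₁ := by rw [pent]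
  have d3 : r₃ * ((r₁ * r₂ * r₃ * r₂ * r₁) * r₃ * (r₁ * r₂ * r₃ * r₂ * r₁) * r₃)
      = r₁ * r₂ * r₁ := by
    calc r₃ * ((r₁ * r₂ * r₃ * r₂ * r₁) * r₃ * (r₁ * r₂ * r₃ * r₂ * r₁) * r₃)
        = r₃ * (r₁ * (r₃ * r₂) * r₁) := by rw [d2]
      _ = (r₃ * r₁) * r₃ * r₂ * r₁ := by group
      _ = (r₁ * r₃) * r₃ * r₂ * r₁ := by rw [← c13]
      _ = r₁ * (r₃ * r₃) * (r₂ * r₁) := by group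
      _ = r₁ * (1 : G) * (r₂ * r₁) := by rw [i3]
      _ = r₁ * r₂ * r₁ := by group
  have hw : r₂ * r₃ * (r₁ * r₂ * r₃ * r₂ * r₁) * r₃ * (r₁ * r₂ * r₃ * r₂ * r₁) * r₃ * r₂
      = r₁ := by
    calc r₂ * r₃ * (r₁ * r₂ * r₃ * r₂ * r₁) * r₃ * (r₁ * r₂ * r₃ * r₂ * r₁) * r₃ * r₂
        = r₂ * (r₃ * ((r₁ * r₂ * r₃ * r₂ * r₁) * r₃ * (r₁ * r₂ * r₃ * r₂ * r₁) * r₃)) * r₂ := by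
          group
      _ = r₂ * (r₁ * r₂ * r₁) * r₂ := by rw [d3]
      _ = (r₂ * r₁ * r₂) * (r₁ * r₂) := by group
      _ = (r₁ * r₂ * r₁) * (r₁ * r₂) := by rw [br]
      _ = r₁ * r₂ * (r₁ * r₁) * r₂ := by group
      _ = r₁ * r₂ * (1 : G) * r₂ := by rw [i1]
      _ = r₁ * (r₂ * r₂) := by group
      _ = r₁ * (1 : G) := by rw [i2]
      _ = r₁ := mul_one r₁
  -- r₀ commutes with the word, hence with r₁
  have C0a : Commute r₀ (r₁ * r₂ * r₃ * r₂ * r₁) := Commute.symm ha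
  have C02 : Commute r₀ r₂ := c02
  have C03 : Commute r₀ r₃ := c03
  have Cw : Commute r₀
      (r₂ * r₃ * (r₁ * r₂ * r₃ * r₂ * r₁) * r₃ * (r₁ * r₂ * r₃ * r₂ * r₁) * r₃ * r₂) :=
    (((((C02.mul_right C03).mul_right C0a).mul_right C03).mul_right C0a).mul_right
      C03).mul_right C02
  have c01 : r₀ * r₁ = r₁ * r₀ := by
    have hcomm : Commute r₀ r₁ := hw ▸ Cw
    exact hcomm.eq
  -- conclude r₀ = 1
  have hone : r₂ * r₁ * r₀ * r₁ * r₂ = 1 := by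
    rw [← hA]
    calc r₀ * r₁ * r₀ * r₁ = r₀ * (r₁ * r₀) * r₁ := by group
      _ = r₀ * (r₀ * r₁) * r₁ := by rw [← c01]
      _ = (r₀ * r₀) * (r₁ * r₁) := by group
      _ = (1 : G) * (1 : G) := by rw [i0, i1]
      _ = 1 := one_mul 1
  have hr0 : r₀ = 1 := by
    calc r₀ = r₁⁻¹ * (r₂⁻¹ * (r₂ * r₁ * r₀ * r₁ * r₂) * r₂⁻¹) * r₁⁻¹ := by group
      _ = r₁⁻¹ * (r₂⁻¹ * (1 : G) * r₂⁻¹) * r₁⁻¹ := by rw [hone]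
      _ = r₁⁻¹ * (r₂⁻¹ * r₂⁻¹) * r₁⁻¹ := by group
      _ = r₁ * (r₂ * r₂) * r₁ := by rw [inv1, inv2]
      _ = r₁ * (1 : G) * r₁ := by rw [i2]
      _ = r₁ * r₁ := by group
      _ = 1 := i1
  rw [hr0, orderOf_one] at h0
  exact absurd h0 (by norm_num)
end
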